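/- Let d ≥ 5. There exists a constant C > 0 such that for all z, x_1, x_2 ∈ ℤ^d: ∑_{y ∈ ℤ^d} g_{d−2}(z,y)·g_{d−2}(x_1,y)·g_{d−4}(x_2,y) ≤ C·g_{d−4}(x_1,x_2)·(g_{d−4}(x_1,z) + g_{d−4}(x_2,z)). -/

import Mathlib

open scoped ENNReal

noncomputable section

/-- The kernel `g_β(x,y) = 1/(1 + ‖x−y‖^β)` on `ℤ^d`, with the Euclidean norm. -/
def gZ (d : ℕ) (β : ℝ) (x y : Fin d → ℤ) : ℝ :=
  1 / (1 + Real.sqrt (∑ i, ((x i - y i : ℤ) : ℝ) ^ 2) ^ β)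

namespace GKB
open Finset
variable {d : ℕ}


/-- scalar kernel `1/(1+t^p)` -/
def gr (p : ℕ) (t : ℝ) : ℝ := 1 / (1 + t ^ p)

lemma one_add_pow_pos {t : ℝ} (ht : 0 ≤ t) (p : ℕ) : 0 < 1 + t ^ p := by positivity

lemma gr_pos {t : ℝ} (ht : 0 ≤ t) (p : ℕ) : 0 < gr p t := by
  unfold gr; positivity

lemma gr_nonneg {t : ℝ} (ht : 0 ≤ t) (p : ℕ) : 0 ≤ gr p t := (gr_pos ht p).le

lemma gr_le_one {t : ℝ} (ht : 0 ≤ t) (p : ℕ) : gr p t ≤ 1 := by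
  rw [gr, div_le_one (one_add_pow_pos ht p)]
  nlinarith [pow_nonneg ht p]

lemma gr_anti {t u : ℝ} (ht : 0 ≤ t) (htu : t ≤ u) (p : ℕ) : gr p u ≤ gr p t := by
  apply one_div_le_one_div_of_le (one_add_pow_pos ht p)
  have := pow_le_pow_left₀ ht htu p
  linarith

lemma gr_double {s a : ℝ} (hs : 0 ≤ s) (ha : 0 ≤ a) (h : s ≤ 2 * a) (p : ℕ) :
    gr p a ≤ 2 ^ p * gr p s := by
  rw [gr, gr, mul_one_div, div_le_div_iff₀ (one_add_pow_pos ha p) (one_add_pow_pos hs p)]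
  have h1 : s ^ p ≤ 2 ^ p * a ^ p := by
    calc s ^ p ≤ (2 * a) ^ p := pow_le_pow_left₀ hs h p
    _ = 2 ^ p * a ^ p := mul_pow 2 a p
  have h2 : (1 : ℝ) ≤ 2 ^ p := one_le_pow₀ (by norm_num)
  nlinarith [pow_nonneg ha p, pow_nonneg hs p]

lemma pow_le_one_add_pow {t : ℝ} (ht : 0 ≤ t) {e p : ℕ} (hep : e ≤ p) : t ^ e ≤ 1 + t ^ p := by
  rcases le_total t 1 with h | h
  · have := pow_le_one₀ ht h (n := e)
    nlinarith [pow_nonneg ht p]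
  · have := pow_le_pow_right₀ h hep
    nlinarith [pow_nonneg ht e]

/-- Claim A -/
lemma claimA (q : ℕ) {a c r : ℝ} (ha : 0 ≤ a) (hc : 0 ≤ c) (hr : 0 ≤ r)
    (htri : r ≤ a + c) :
    gr (q + 2) a * gr q c ≤ (2 ^ q + 1) * (gr q r * (gr (q + 2) a + gr (q + 2) c)) := by
  have h2q : (1 : ℝ) ≤ 2 ^ q := one_le_pow₀ (by norm_num)
  rcases le_total a c with hac | hca
  · -- c ≥ a, so r ≤ 2c : gr q c ≤ 2^q gr q r
    have h1 : gr q c ≤ 2 ^ q * gr q r := gr_double hr hc (by linarith) q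
    have h2 : gr (q+2) a * gr q c ≤ gr (q+2) a * (2 ^ q * gr q r) :=
      mul_le_mul_of_nonneg_left h1 (gr_nonneg ha _)
    have h3 : gr (q+2) a ≤ gr (q+2) a + gr (q+2) c := le_add_of_nonneg_right (gr_nonneg hc _)
    have h4 := gr_nonneg hr q
    have h5 := gr_nonneg ha (q+2)
    nlinarith [mul_le_mul_of_nonneg_left h3 (mul_nonneg (by positivity : (0:ℝ) ≤ 2^q) h4),
      gr_nonneg hc (q+2)]
  · -- a ≥ c, key product inequality
    have key : (1 + r ^ q) * (1 + c ^ (q+2)) ≤ (2 ^ q + 1) * ((1 + a ^ (q+2)) * (1 + c ^ q)) := by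
      have h1 : r ^ q ≤ 2 ^ q * a ^ q := by
        calc r ^ q ≤ (2*a) ^ q := pow_le_pow_left₀ hr (by linarith) q
        _ = 2 ^ q * a ^ q := mul_pow 2 a q
      have h2 : c ^ (q+2) ≤ a ^ 2 * c ^ q := by
        have : c ^ (q+2) = c ^ 2 * c ^ q := by ring
        rw [this]
        exact mul_le_mul_of_nonneg_right (by nlinarith) (pow_nonneg hc q)
      have h3 : a ^ q ≤ 1 + a ^ (q+2) := pow_le_one_add_pow ha (by omega)
      have h4 : a ^ 2 ≤ 1 + a ^ (q+2) := pow_le_one_add_pow ha (by omega)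
      have h5 : r ^ q * c ^ (q+2) ≤ (2 ^ q * a ^ q) * (a ^ 2 * c ^ q) :=
        mul_le_mul h1 h2 (pow_nonneg hc _) (by positivity)
      have h6 : a ^ q * a ^ 2 = a ^ (q + 2) := by ring
      have hcq : (0:ℝ) ≤ c ^ q := pow_nonneg hc q
      have hap : (0:ℝ) ≤ a ^ (q+2) := pow_nonneg ha (q+2)
      have hA : c ^ (q+2) ≤ (1 + a ^ (q+2)) * c ^ q := by
        calc c ^ (q+2) ≤ a ^ 2 * c ^ q := h2
        _ ≤ (1 + a ^ (q+2)) * c ^ q := mul_le_mul_of_nonneg_right h4 hcq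
      have hB : r ^ q ≤ 2 ^ q * (1 + a ^ (q+2)) := by
        calc r ^ q ≤ 2 ^ q * a ^ q := h1
        _ ≤ 2 ^ q * (1 + a ^ (q+2)) := mul_le_mul_of_nonneg_left h3 (by positivity)
      have hC : r ^ q * c ^ (q+2) ≤ 2 ^ q * (a ^ (q+2) * c ^ q) := by
        calc r ^ q * c ^ (q+2) ≤ 2 ^ q * a ^ q * (a ^ 2 * c ^ q) := h5
        _ = 2 ^ q * (a ^ (q+2) * c ^ q) := by ring
      have hrc : (0:ℝ) ≤ r ^ q * c ^ (q+2) := mul_nonneg (pow_nonneg hr q) (pow_nonneg hc _)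
      have hapc : (0:ℝ) ≤ a ^ (q+2) * c ^ q := mul_nonneg hap hcq
      nlinarith [hA, hB, hC, hcq, hap, hapc]
    have step : gr (q+2) a * gr q c ≤ (2 ^ q + 1) * (gr q r * gr (q+2) c) := by
      have hX : gr (q+2) a * gr q c = 1 / ((1 + a ^ (q+2)) * (1 + c ^ q)) := by
        rw [gr, gr]; rw [div_mul_div_comm, one_mul]
      have hY : gr q r * gr (q+2) c = 1 / ((1 + r ^ q) * (1 + c ^ (q+2))) := by
        rw [gr, gr]; rw [div_mul_div_comm, one_mul]
      rw [hX, hY, mul_one_div, div_le_div_iff₀ (by positivity) (by positivity)]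
      nlinarith [key]
    have h3 : gr (q+2) c ≤ gr (q+2) a + gr (q+2) c := le_add_of_nonneg_left (gr_nonneg ha _)
    have h4 := gr_nonneg hr q
    nlinarith [mul_le_mul_of_nonneg_left h3 (mul_nonneg (by positivity : (0:ℝ) ≤ 2^q+1) h4)]

open Finset

variable {d : ℕ}

/-- Euclidean norm of a lattice point. -/
def nn (w : Fin d → ℤ) : ℝ := Real.sqrt (∑ i, ((w i : ℝ)) ^ 2)

lemma nn_nonneg (w : Fin d → ℤ) : 0 ≤ nn w := Real.sqrt_nonneg _

lemma nn_neg (w : Fin d → ℤ) : nn (-w) = nn w := by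
  unfold nn
  congr 1
  refine Finset.sum_congr rfl fun i _ => ?_
  simp [Pi.neg_apply]

lemma nn_sub_symm (x y : Fin d → ℤ) : nn (x - y) = nn (y - x) := by
  rw [← nn_neg (x - y), neg_sub]

/-- `nn` as a Euclidean norm. -/
lemma nn_eq_norm (w : Fin d → ℤ) :
    nn w = ‖(WithLp.equiv 2 (Fin d → ℝ)).symm (fun i => (w i : ℝ))‖ := by
  rw [EuclideanSpace.norm_eq]
  unfold nn
  congr 1
  refine Finset.sum_congr rfl fun i _ => ?_
  rw [WithLp.equiv_symm_apply, PiLp.toLp_apply, Real.norm_eq_abs, sq_abs]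

lemma nn_triangle (u v : Fin d → ℤ) : nn (u + v) ≤ nn u + nn v := by
  rw [nn_eq_norm, nn_eq_norm, nn_eq_norm]
  have h : (WithLp.equiv 2 (Fin d → ℝ)).symm (fun i => ((u + v) i : ℝ)) =
      (WithLp.equiv 2 (Fin d → ℝ)).symm (fun i => (u i : ℝ)) +
      (WithLp.equiv 2 (Fin d → ℝ)).symm (fun i => (v i : ℝ)) := by
    ext i
    simp [WithLp.equiv_symm_apply]
  rw [h]
  exact norm_add_le _ _

/-- sup norm (as a natural number). -/
def msup (w : Fin d → ℤ) : ℕ := Finset.univ.sup fun i => (w i).natAbs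

lemma natAbs_le_msup (w : Fin d → ℤ) (i : Fin d) : (w i).natAbs ≤ msup w := by
  exact Finset.le_sup (f := fun i => (w i).natAbs) (Finset.mem_univ i)

lemma abs_cast_eq_natAbs (n : ℤ) : |(n : ℝ)| = ((n.natAbs : ℕ) : ℝ) := by
  rw [Nat.cast_natAbs, Int.cast_abs]

lemma msup_le_nn (hd : 0 < d) (w : Fin d → ℤ) : (msup w : ℝ) ≤ nn w := by
  have : Nonempty (Fin d) := ⟨⟨0, hd⟩⟩
  obtain ⟨i, -, hi⟩ := Finset.exists_mem_eq_sup Finset.univ Finset.univ_nonempty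
    (fun i => (w i).natAbs)
  rw [msup, hi]
  have h1 : ((w i).natAbs : ℝ) = |((w i : ℝ))| := (abs_cast_eq_natAbs (w i)).symm
  rw [h1, ← Real.sqrt_sq_eq_abs]
  apply Real.sqrt_le_sqrt
  exact Finset.single_le_sum (f := fun j => ((w j : ℝ))^2) (fun j _ => sq_nonneg _)
    (Finset.mem_univ i)

lemma nn_le_d_msup (w : Fin d → ℤ) : nn w ≤ (d : ℝ) * msup w := by
  have h1 : ∀ i, ((w i : ℝ))^2 ≤ ((msup w : ℝ))^2 := by
    intro i
    have h0 := natAbs_le_msup w i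
    have h2 : |((w i : ℝ))| ≤ (msup w : ℝ) := by
      rw [abs_cast_eq_natAbs]
      exact_mod_cast h0
    nlinarith [abs_nonneg ((w i : ℝ)), neg_abs_le ((w i : ℝ)), le_abs_self ((w i : ℝ))]
  have h3 : nn w ≤ Real.sqrt ((d : ℝ) * ((msup w : ℝ))^2) := by
    apply Real.sqrt_le_sqrt
    calc ∑ i, ((w i : ℝ))^2 ≤ ∑ _i : Fin d, ((msup w : ℝ))^2 := Finset.sum_le_sum fun i _ => h1 i
    _ = (d : ℝ) * ((msup w : ℝ))^2 := by simp [mul_comm]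
  calc nn w ≤ Real.sqrt ((d : ℝ) * ((msup w : ℝ))^2) := h3
  _ ≤ Real.sqrt (((d : ℝ) * (msup w : ℝ))^2) := by
      apply Real.sqrt_le_sqrt
      have hm : (0:ℝ) ≤ (msup w : ℝ) := Nat.cast_nonneg _
      rcases Nat.eq_zero_or_pos d with h | h
      · subst h; simp
      · have : (1:ℝ) ≤ d := by exact_mod_cast h
        nlinarith
  _ = (d : ℝ) * (msup w : ℝ) := Real.sqrt_sq (by positivity)

/-- the box `[-K,K]^d` -/
def box (K : ℕ) : Finset (Fin d → ℤ) := Fintype.piFinset fun _ => Finset.Icc (-(K:ℤ)) (K:ℤ)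

lemma mem_box {K : ℕ} {w : Fin d → ℤ} : w ∈ (box K : Finset (Fin d → ℤ)) ↔ msup w ≤ K := by
  simp only [box, Fintype.mem_piFinset, Finset.mem_Icc, msup, Finset.sup_le_iff,
    Finset.mem_univ, forall_true_left]
  constructor <;> (intro h i ; have := h i ; omega)

lemma card_box (K : ℕ) : (box (d := d) K).card = (2*K+1)^d := by
  rw [box, Fintype.card_piFinset]
  simp [Int.card_Icc]
  congr 1
  omega

lemma box_mono {K L : ℕ} (h : K ≤ L) : (box K : Finset (Fin d → ℤ)) ⊆ box L := fun w hw => by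
  rw [mem_box] at *; omega


lemma pow_sub_pow_le {a b : ℝ} (h0 : 0 ≤ b) (h : b ≤ a) (n : ℕ) :
    a ^ n - b ^ n ≤ n * (a - b) * a ^ (n - 1) := by
  rw [← geom_sum₂_mul a b n]
  have hbd : ∀ i ∈ Finset.range n, a ^ i * b ^ (n - 1 - i) ≤ a ^ (n - 1) := by
    intro i hi
    rw [Finset.mem_range] at hi
    calc a ^ i * b ^ (n - 1 - i) ≤ a ^ i * a ^ (n - 1 - i) :=
      mul_le_mul_of_nonneg_left (pow_le_pow_left₀ h0 h _) (pow_nonneg (h0.trans h) i)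
    _ = a ^ (i + (n - 1 - i)) := (pow_add a i _).symm
    _ = a ^ (n - 1) := by congr 1; omega
  have hsum : (∑ i ∈ Finset.range n, a ^ i * b ^ (n - 1 - i)) ≤ n * a ^ (n-1) := by
    calc (∑ i ∈ Finset.range n, a ^ i * b ^ (n - 1 - i)) ≤ ∑ _i ∈ Finset.range n, a ^ (n-1) :=
      Finset.sum_le_sum hbd
    _ = n * a ^ (n-1) := by simp [mul_comm]
  have hab : 0 ≤ a - b := by linarith
  calc (∑ i ∈ Finset.range n, a ^ i * b ^ (n - 1 - i)) * (a - b) ≤ (n * a ^ (n-1)) * (a - b) :=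
    mul_le_mul_of_nonneg_right hsum hab
  _ = n * (a - b) * a ^ (n-1) := by ring

/-- Cardinality of the shell. -/
lemma card_shell (K : ℕ) :
    (((box (K+1) : Finset (Fin d → ℤ)) \ box K).card : ℝ) ≤ 2 * d * (2*(K:ℝ)+3) ^ (d - 1) := by
  have hsub : (box K : Finset (Fin d → ℤ)) ⊆ box (K+1) := box_mono (Nat.le_succ K)
  rw [Finset.card_sdiff_of_subset hsub, card_box, card_box]
  have hle : (2*K+1)^d ≤ (2*(K+1)+1)^d := Nat.pow_le_pow_left (by omega) d
  rw [Nat.cast_sub hle]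
  push_cast
  have := pow_sub_pow_le (a := 2*(K:ℝ)+3) (b := 2*(K:ℝ)+1) (by positivity) (by linarith) d
  calc (2*((K:ℝ)+1)+1) ^ d - (2*(K:ℝ)+1) ^ d
      = (2*(K:ℝ)+3) ^ d - (2*(K:ℝ)+1) ^ d := by ring_nf
  _ ≤ d * ((2*(K:ℝ)+3) - (2*(K:ℝ)+1)) * (2*(K:ℝ)+3) ^ (d-1) := this
  _ = 2 * d * (2*(K:ℝ)+3) ^ (d - 1) := by ring_nf

/-- Per-shell term bound: members of the shell have `nn ≥ K+1`. -/
lemma nn_ge_of_shell (hd : 0 < d) {K : ℕ} {w : Fin d → ℤ}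
    (hw : w ∈ (box (K+1) : Finset (Fin d → ℤ)) \ box K) : ((K:ℝ)+1) ≤ nn w := by
  rw [Finset.mem_sdiff, mem_box, mem_box] at hw
  have h1 : K + 1 ≤ msup w := by omega
  have h2 : ((K:ℝ)+1) ≤ (msup w : ℝ) := by exact_mod_cast h1
  exact h2.trans (msup_le_nn hd w)

/-- The main shell estimate: sum over a shell of `1/(K+1)^p` type terms. -/
lemma shell_sum_le (hd : 0 < d) (K : ℕ) {f : (Fin d → ℤ) → ℝ} {M : ℝ} (hM : 0 ≤ M)
    (hf : ∀ w ∈ (box (K+1) : Finset (Fin d → ℤ)) \ box K, f w ≤ M) 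
    :
    ∑ w ∈ (box (K+1) : Finset (Fin d → ℤ)) \ box K, f w ≤ 2 * d * (2*(K:ℝ)+3) ^ (d - 1) * M := by
  calc ∑ w ∈ (box (K+1) : Finset (Fin d → ℤ)) \ box K, f w 
      ≤ ∑ _w ∈ (box (K+1) : Finset (Fin d → ℤ)) \ box K, M := Finset.sum_le_sum hf
  _ = (((box (K+1) : Finset (Fin d → ℤ)) \ box K).card : ℝ) * M := by simp [mul_comm]
  _ ≤ 2 * d * (2*(K:ℝ)+3) ^ (d - 1) * M := mul_le_mul_of_nonneg_right (card_shell K) hM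


/-- gr value bound on shells -/
lemma gr_shell_le (hd : 0 < d) (p : ℕ) {K : ℕ} {w : Fin d → ℤ}
    (hw : w ∈ (box (K+1) : Finset (Fin d → ℤ)) \ box K) :
    gr p (nn w) ≤ 1 / ((K:ℝ)+1) ^ p := by
  have h1 := nn_ge_of_shell hd hw
  have h2 : (0:ℝ) ≤ (K:ℝ)+1 := by positivity
  have h3 : nn w ≥ 0 := nn_nonneg w
  calc gr p (nn w) ≤ gr p ((K:ℝ)+1) := gr_anti h2 h1 p
  _ ≤ 1 / ((K:ℝ)+1) ^ p := by
      apply one_div_le_one_div_of_le (by positivity)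
      linarith

/-- ball sum estimate (finite version): `∑_{box K} gr (d-2) ≤ c (K+1)^2` shape. -/
lemma sum_box_le (hd : 5 ≤ d) (K : ℕ) :
    ∑ w ∈ (box K : Finset (Fin d → ℤ)), gr (d-2) (nn w)
      ≤ 1 + (2*(d:ℝ)*3^(d-1)) * K^2 := by
  induction K with
  | zero =>
    have : ∑ w ∈ (box 0 : Finset (Fin d → ℤ)), gr (d-2) (nn w)
        ≤ ∑ _w ∈ (box 0 : Finset (Fin d → ℤ)), (1:ℝ) :=
      Finset.sum_le_sum fun w _ => gr_le_one (nn_nonneg w) _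
    have h2 : ∑ _w ∈ (box 0 : Finset (Fin d → ℤ)), (1:ℝ) = ((box 0 : Finset (Fin d → ℤ)).card : ℝ) := by
      simp
    have h3 : ((box 0 : Finset (Fin d → ℤ)).card : ℝ) = 1 := by
      rw [card_box]; norm_num
    simp only [Nat.cast_zero] at *
    nlinarith [this, h2 ▸ this]
  | succ K ih =>
    have hsub : (box K : Finset (Fin d → ℤ)) ⊆ box (K+1) := box_mono (Nat.le_succ K)
    rw [← Finset.sum_sdiff hsub]
    -- shell part
    have hM : ∀ w ∈ (box (K+1) : Finset (Fin d → ℤ)) \ box K,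
        gr (d-2) (nn w) ≤ 1 / ((K:ℝ)+1) ^ (d-2) :=
      fun w hw => gr_shell_le (by omega) (d-2) hw
    have hshell := shell_sum_le (by omega : 0 < d) K (by positivity) hM
    have hshell2 : ∑ w ∈ (box (K+1) : Finset (Fin d → ℤ)) \ box K, gr (d-2) (nn w)
        ≤ (2*(d:ℝ)*3^(d-1)) * ((K:ℝ)+1) := by
      refine hshell.trans ?_
      have h1 : (2*(K:ℝ)+3) ^ (d-1) ≤ (3*((K:ℝ)+1)) ^ (d-1) :=
        pow_le_pow_left₀ (by positivity) (by linarith) _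
      have h2 : (3*((K:ℝ)+1)) ^ (d-1) = 3 ^ (d-1) * ((K:ℝ)+1) ^ (d-1) := mul_pow _ _ _
      have h3 : ((K:ℝ)+1) ^ (d-1) = ((K:ℝ)+1) ^ (d-2) * ((K:ℝ)+1) := by
        rw [← pow_succ]
        congr 1
        omega
      have h4 : (0:ℝ) < ((K:ℝ)+1) ^ (d-2) := by positivity
      calc 2 * (d:ℝ) * (2*(K:ℝ)+3) ^ (d - 1) * (1 / ((K:ℝ)+1) ^ (d-2))
          ≤ 2 * (d:ℝ) * (3 ^ (d-1) * (((K:ℝ)+1) ^ (d-2) * ((K:ℝ)+1))) * (1 / ((K:ℝ)+1) ^ (d-2)) := by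
            apply mul_le_mul_of_nonneg_right _ (by positivity)
            rw [← h3, ← h2]
            apply mul_le_mul_of_nonneg_left h1 (by positivity)
      _ = (2*(d:ℝ)*3^(d-1)) * ((K:ℝ)+1) := by field_simp
    have hcast : ((K+1 : ℕ) : ℝ) = (K:ℝ)+1 := by push_cast; ring
    rw [hcast]
    have hc : (0:ℝ) ≤ 2*(d:ℝ)*3^(d-1) := by positivity
    nlinarith [ih, hshell2, Nat.cast_nonneg (α := ℝ) K]


/-- telescoping bound for the tail. -/
lemma telescope (q : ℕ) (hq : 1 ≤ q) {k : ℝ} (hk : 1 ≤ k) :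
    1 / k ^ (q+1) ≤ 2 ^ (q+1) * (1 / k ^ q - 1 / (k+1) ^ q) := by
  obtain ⟨m, rfl⟩ : ∃ m, q = m + 1 := ⟨q - 1, by omega⟩
  have hk0 : (0:ℝ) < k := by linarith
  have h1 : k ^ (m+1) + k ^ m ≤ (k+1) ^ (m+1) := by
    calc (k+1) ^ (m+1) = (k+1) * (k+1)^m := by ring
    _ ≥ (k+1) * k^m := by
        apply mul_le_mul_of_nonneg_left (pow_le_pow_left₀ (by linarith) (by linarith) m) (by linarith)
    _ = k ^ (m+1) + k ^ m := by ring
  have h2 : 1 / k ^ (m+1) - 1 / (k+1) ^ (m+1)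
      = ((k+1)^(m+1) - k^(m+1)) / (k^(m+1) * (k+1)^(m+1)) := by
    field_simp
  rw [h2]
  have hdenle : k^(m+1) * (k+1)^(m+1) ≤ 2^(m+1) * k^(2*m+2) := by
    have : (k+1)^(m+1) ≤ (2*k)^(m+1) := pow_le_pow_left₀ (by linarith) (by linarith) _
    calc k^(m+1) * (k+1)^(m+1) ≤ k^(m+1) * (2*k)^(m+1) :=
      mul_le_mul_of_nonneg_left this (by positivity)
    _ = 2^(m+1) * k^(2*m+2) := by rw [mul_pow, show 2*m+2 = (m+1)+(m+1) by omega, pow_add]; ring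
  have h3 : k^m / (2^(m+1) * k^(2*m+2)) ≤ ((k+1)^(m+1) - k^(m+1)) / (k^(m+1) * (k+1)^(m+1)) :=
    div_le_div₀ (by nlinarith [pow_nonneg hk0.le m]) (by nlinarith) (by positivity) hdenle
  have hA : k^m / (2^(m+1) * k^(2*m+2)) = 1 / (2^(m+1) * k^(m+2)) := by
    rw [show 2*m+2 = m + (m+2) by omega, pow_add]
    rw [div_eq_div_iff (by positivity) (by positivity)]
    ring
  rw [hA] at h3
  calc 1 / k ^ (m+1+1) = 1 / k ^ (m+2) := by norm_num
  _ ≤ 2 ^ (m+1+1) * (1 / (2^(m+1) * k^(m+2))) := by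
      rw [show (2:ℝ)^(m+1+1) = 2 * 2^(m+1) by rw [pow_succ]; ring]
      rw [mul_one_div, div_le_div_iff₀ (by positivity) (by positivity)]
      have : (0:ℝ) < 2^(m+1) := by positivity
      nlinarith [pow_pos hk0 (m+2)]
  _ ≤ 2 ^ (m+1+1) * (((k+1)^(m+1) - k^(m+1)) / (k^(m+1) * (k+1)^(m+1))) :=
      mul_le_mul_of_nonneg_left h3 (by positivity)


/-- tail sum estimate (finite version). -/
lemma tail_box_le (hd : 5 ≤ d) (L n : ℕ) :
    ∑ w ∈ (box (L+n) : Finset (Fin d → ℤ)), (gr (d-2) (nn w))^2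
      - ∑ w ∈ (box L : Finset (Fin d → ℤ)), (gr (d-2) (nn w))^2
    ≤ (2*(d:ℝ)*3^(d-1)*2^(d-3)) * (1 / ((L:ℝ)+1)^(d-4) - 1 / ((L:ℝ)+1+n)^(d-4)) := by
  induction n with
  | zero => simp
  | succ n ih =>
    have hsub : (box (L+n) : Finset (Fin d → ℤ)) ⊆ box (L+n+1) := box_mono (by omega)
    have hsplit := Finset.sum_sdiff (f := fun w => (gr (d-2) (nn w))^2) hsub
    -- shell estimate
    have hM : ∀ w ∈ (box (L+n+1) : Finset (Fin d → ℤ)) \ box (L+n),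
        (gr (d-2) (nn w))^2 ≤ (1 / (((L+n:ℕ):ℝ)+1) ^ (d-2))^2 := by
      intro w hw
      have h1 := gr_shell_le (by omega : 0 < d) (d-2) hw
      have h2 := gr_nonneg (nn_nonneg w) (d-2)
      nlinarith
    have hshell := shell_sum_le (by omega : 0 < d) (L+n) (by positivity) hM
    -- simplify the shell bound to c * 1/(L+n+1)^(d-3)
    have hk1 : (1:ℝ) ≤ ((L+n:ℕ):ℝ)+1 := by have := Nat.cast_nonneg (α := ℝ) (L+n); linarith
    have hkpos : (0:ℝ) < ((L+n:ℕ):ℝ)+1 := by positivity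
    have hb2 : 2 * (d:ℝ) * (2*((L+n:ℕ):ℝ)+3) ^ (d - 1) * (1 / (((L+n:ℕ):ℝ)+1) ^ (d-2))^2
        ≤ (2*(d:ℝ)*3^(d-1)) * (1 / (((L+n:ℕ):ℝ)+1) ^ (d-3)) := by
      set k : ℝ := ((L+n:ℕ):ℝ)+1 with hk
      have h1 : (2*((L+n:ℕ):ℝ)+3) ^ (d-1) ≤ (3*k) ^ (d-1) := by
        apply pow_le_pow_left₀ (by positivity)
        have h0 : (0:ℝ) ≤ ((L+n:ℕ):ℝ) := Nat.cast_nonneg _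
        rw [hk]; linarith
      have h2 : (3*k) ^ (d-1) = 3 ^ (d-1) * k ^ (d-1) := mul_pow _ _ _
      have h3 : k ^ (d-1) * (1/ k ^ (d-2))^2 = 1 / k ^ (d-3) := by
        have hne : k ≠ 0 := hkpos.ne'
        have hsp : k^((d-2)*2) = k^(d-3) * k^(d-1) := by rw [← pow_add]; congr 1; omega
        rw [div_pow, one_pow, ← pow_mul, hsp]
        field_simp
      calc 2 * (d:ℝ) * (2*((L+n:ℕ):ℝ)+3) ^ (d - 1) * (1 / k ^ (d-2))^2
          ≤ 2 * (d:ℝ) * (3 ^ (d-1) * k ^ (d-1)) * (1 / k ^ (d-2))^2 := by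
            apply mul_le_mul_of_nonneg_right _ (by positivity)
            apply mul_le_mul_of_nonneg_left (h1.trans_eq h2) (by positivity)
      _ = (2*(d:ℝ)*3^(d-1)) * (k ^ (d-1) * (1/ k ^ (d-2))^2) := by ring
      _ = (2*(d:ℝ)*3^(d-1)) * (1 / k ^ (d-3)) := by rw [h3]
    -- telescope
    have htel : 1 / (((L+n:ℕ):ℝ)+1) ^ (d-3)
        ≤ 2^(d-3) * (1 / (((L+n:ℕ):ℝ)+1) ^ (d-4) - 1 / (((L+n:ℕ):ℝ)+2) ^ (d-4)) := by
      have := telescope (d-4) (by omega) (k := ((L+n:ℕ):ℝ)+1) hk1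
      rw [show d-4+1 = d-3 by omega] at this
      convert this using 4 <;> ring
    -- combine
    have hstep : ∑ w ∈ (box (L+n+1) : Finset (Fin d → ℤ)) \ box (L+n), (gr (d-2) (nn w))^2
        ≤ (2*(d:ℝ)*3^(d-1)*2^(d-3)) *
          (1 / (((L+n:ℕ):ℝ)+1) ^ (d-4) - 1 / (((L+n:ℕ):ℝ)+2) ^ (d-4)) := by
      refine (hshell.trans hb2).trans ?_
      calc (2*(d:ℝ)*3^(d-1)) * (1 / (((L+n:ℕ):ℝ)+1) ^ (d-3))
          ≤ (2*(d:ℝ)*3^(d-1)) * (2^(d-3) * (1 / (((L+n:ℕ):ℝ)+1) ^ (d-4) - 1 / (((L+n:ℕ):ℝ)+2) ^ (d-4))) :=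
            mul_le_mul_of_nonneg_left htel (by positivity)
      _ = (2*(d:ℝ)*3^(d-1)*2^(d-3)) * (1 / (((L+n:ℕ):ℝ)+1) ^ (d-4) - 1 / (((L+n:ℕ):ℝ)+2) ^ (d-4)) := by
            ring
    have hEq : ∑ w ∈ (box (L+(n+1)) : Finset (Fin d → ℤ)), (gr (d-2) (nn w))^2
        = ∑ w ∈ (box (L+n+1) : Finset (Fin d → ℤ)) \ box (L+n), (gr (d-2) (nn w))^2
          + ∑ w ∈ (box (L+n) : Finset (Fin d → ℤ)), (gr (d-2) (nn w))^2 := by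
      rw [show L+(n+1) = L+n+1 by omega, ← hsplit]
    rw [hEq]
    push_cast
    push_cast at hstep
    set c : ℝ := 2*(d:ℝ)*3^(d-1)*2^(d-3) with hc
    have e1 : 1/((L:ℝ)+↑n+1)^(d-4) = 1/((L:ℝ)+1+(n:ℝ))^(d-4) := by
      rw [show (L:ℝ)+(n:ℝ)+1 = (L:ℝ)+1+(n:ℝ) by ring]
    have e2 : 1/((L:ℝ)+↑n+2)^(d-4) = 1/((L:ℝ)+1+((n:ℝ)+1))^(d-4) := by
      rw [show (L:ℝ)+(n:ℝ)+2 = (L:ℝ)+1+((n:ℝ)+1) by ring]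
    rw [e1, e2] at hstep
    have hsum : c * (1/((L:ℝ)+1)^(d-4) - 1/((L:ℝ)+1+(n:ℝ))^(d-4))
        + c * (1/((L:ℝ)+1+(n:ℝ))^(d-4) - 1/((L:ℝ)+1+((n:ℝ)+1))^(d-4))
        = c * (1/((L:ℝ)+1)^(d-4) - 1/((L:ℝ)+1+((n:ℝ)+1))^(d-4)) := by ring
    linarith [ih, hstep]


lemma tsum_le_of_finsets {f : (Fin d → ℤ) → ℝ≥0∞} {c : ℝ≥0∞}
    (h : ∀ F : Finset (Fin d → ℤ), ∑ w ∈ F, f w ≤ c) : ∑' w, f w ≤ c := by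
  rw [ENNReal.tsum_eq_iSup_sum]
  exact iSup_le h

/-- S1 : ball sum estimate, tsum version -/
lemma S1 (hd : 5 ≤ d) {R : ℝ} (hR : 0 ≤ R) :
    ∑' w : Fin d → ℤ, (if nn w ≤ R then ENNReal.ofReal (gr (d-2) (nn w)) else 0)
      ≤ ENNReal.ofReal ((1 + 2*(d:ℝ)*3^(d-1)) * (1+R)^2) := by
  apply tsum_le_of_finsets
  intro F
  classical
  have hsub : F.filter (fun w => nn w ≤ R) ⊆ box ⌊R⌋₊ := by
    intro w hw
    rw [Finset.mem_filter] at hw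
    rw [mem_box]
    exact Nat.le_floor ((msup_le_nn (by omega) w).trans hw.2)
  calc ∑ w ∈ F, (if nn w ≤ R then ENNReal.ofReal (gr (d-2) (nn w)) else 0)
      = ∑ w ∈ F.filter (fun w => nn w ≤ R), ENNReal.ofReal (gr (d-2) (nn w)) :=
        (Finset.sum_filter _ _).symm
  _ ≤ ∑ w ∈ (box ⌊R⌋₊ : Finset (Fin d → ℤ)), ENNReal.ofReal (gr (d-2) (nn w)) :=
        Finset.sum_le_sum_of_subset hsub
  _ = ENNReal.ofReal (∑ w ∈ (box ⌊R⌋₊ : Finset (Fin d → ℤ)), gr (d-2) (nn w)) :=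
        (ENNReal.ofReal_sum_of_nonneg fun w _ => gr_nonneg (nn_nonneg w) _).symm
  _ ≤ ENNReal.ofReal ((1 + 2*(d:ℝ)*3^(d-1)) * (1+R)^2) := by
        apply ENNReal.ofReal_le_ofReal
        refine (sum_box_le hd ⌊R⌋₊).trans ?_
        have h1 : (⌊R⌋₊ : ℝ) ≤ R := Nat.floor_le hR
        have h2 : (0:ℝ) ≤ (⌊R⌋₊:ℝ) := Nat.cast_nonneg _
        have h3 : (0:ℝ) ≤ 2*(d:ℝ)*3^(d-1) := by positivity
        have h4 : (⌊R⌋₊:ℝ)^2 ≤ (1+R)^2 := by nlinarith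
        have h5 := mul_le_mul_of_nonneg_left h4 h3
        have h6 : (1:ℝ) ≤ (1+R)^2 := by nlinarith
        nlinarith [h5, h6]

/-- S2 : tail sum estimate, tsum version -/
lemma S2 (hd : 5 ≤ d) {R : ℝ} (hR : 0 ≤ R) :
    ∑' w : Fin d → ℤ, (if R < nn w then ENNReal.ofReal ((gr (d-2) (nn w))^2) else 0)
      ≤ ENNReal.ofReal ((2*(d:ℝ)*3^(d-1)*2^(d-3)) * (2*(d:ℝ))^(d-4) / (1+R)^(d-4)) := by
  apply tsum_le_of_finsets
  intro F
  classical
  set L : ℕ := ⌊R / d⌋₊ with hL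
  set n : ℕ := L + F.sup msup with hn
  have hdR : (0:ℝ) < d := by positivity
  have hsub : F.filter (fun w => R < nn w) ⊆ (box (L + n) : Finset (Fin d → ℤ)) \ box L := by
    intro w hw
    rw [Finset.mem_filter] at hw
    rw [Finset.mem_sdiff, mem_box, mem_box]
    constructor
    · have : msup w ≤ F.sup msup := Finset.le_sup hw.1
      omega
    · intro hcon
      have h1 : (msup w : ℝ) ≤ (L : ℝ) := by exact_mod_cast hcon
      have h2 : (L : ℝ) ≤ R / d := Nat.floor_le (by positivity)
      have h3 : nn w ≤ (d:ℝ) * (R / d) := by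
        calc nn w ≤ (d:ℝ) * msup w := nn_le_d_msup w
        _ ≤ (d:ℝ) * (R / d) := by
            apply mul_le_mul_of_nonneg_left (h1.trans h2) (by positivity)
      rw [mul_div_cancel₀ _ hdR.ne'] at h3
      linarith [hw.2]
  calc ∑ w ∈ F, (if R < nn w then ENNReal.ofReal ((gr (d-2) (nn w))^2) else 0)
      = ∑ w ∈ F.filter (fun w => R < nn w), ENNReal.ofReal ((gr (d-2) (nn w))^2) :=
        (Finset.sum_filter _ _).symm
  _ ≤ ∑ w ∈ (box (L+n) : Finset (Fin d → ℤ)) \ box L, ENNReal.ofReal ((gr (d-2) (nn w))^2) :=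
        Finset.sum_le_sum_of_subset hsub
  _ = ENNReal.ofReal (∑ w ∈ (box (L+n) : Finset (Fin d → ℤ)) \ box L, (gr (d-2) (nn w))^2) :=
        (ENNReal.ofReal_sum_of_nonneg fun w _ => sq_nonneg _).symm
  _ ≤ ENNReal.ofReal ((2*(d:ℝ)*3^(d-1)*2^(d-3)) * (2*(d:ℝ))^(d-4) / (1+R)^(d-4)) := by
        apply ENNReal.ofReal_le_ofReal
        have hsub2 : (box L : Finset (Fin d → ℤ)) ⊆ box (L+n) := box_mono (by omega)
        have hdiff : ∑ w ∈ (box (L+n) : Finset (Fin d → ℤ)) \ box L, (gr (d-2) (nn w))^2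
            = ∑ w ∈ (box (L+n) : Finset (Fin d → ℤ)), (gr (d-2) (nn w))^2
              - ∑ w ∈ (box L : Finset (Fin d → ℤ)), (gr (d-2) (nn w))^2 :=
          Finset.sum_sdiff_eq_sub hsub2
        rw [hdiff]
        have htail := tail_box_le hd L n
        have hc : (0:ℝ) ≤ 2*(d:ℝ)*3^(d-1)*2^(d-3) := by positivity
        have h4 : (0:ℝ) < ((L:ℝ)+1+n)^(d-4) := by positivity
        have h5 : 2*(d:ℝ)*3^(d-1)*2^(d-3) * (1/((L:ℝ)+1)^(d-4) - 1/((L:ℝ)+1+n)^(d-4))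
            ≤ 2*(d:ℝ)*3^(d-1)*2^(d-3) * (1/((L:ℝ)+1)^(d-4)) := by
          apply mul_le_mul_of_nonneg_left _ hc
          have : (0:ℝ) < 1/((L:ℝ)+1+n)^(d-4) := by positivity
          linarith
        -- (1+R) ≤ 2d(L+1)
        have h6 : 1 + R ≤ 2*(d:ℝ)*((L:ℝ)+1) := by
          have h7 : R / d < (L:ℝ) + 1 := Nat.lt_floor_add_one _
          have h8 : R < (d:ℝ) * ((L:ℝ)+1) := by
            rw [div_lt_iff₀ hdR] at h7
            linarith [h7]
          have h9 : (1:ℝ) ≤ (d:ℝ) * ((L:ℝ)+1) := by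
            have : (1:ℝ) ≤ (d:ℝ) := by exact_mod_cast (by omega : 1 ≤ d)
            have : (1:ℝ) ≤ (L:ℝ)+1 := by linarith [Nat.cast_nonneg (α := ℝ) L]
            nlinarith
          linarith
        have h10 : 1/((L:ℝ)+1)^(d-4) ≤ (2*(d:ℝ))^(d-4) / (1+R)^(d-4) := by
          rw [div_le_div_iff₀ (by positivity) (by positivity)]
          calc 1 * (1+R)^(d-4) ≤ (2*(d:ℝ)*((L:ℝ)+1))^(d-4) := by
                rw [one_mul]
                exact pow_le_pow_left₀ (by linarith) h6 _
          _ = (2*(d:ℝ))^(d-4) * ((L:ℝ)+1)^(d-4) := mul_pow _ _ _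
        calc ∑ w ∈ (box (L+n) : Finset (Fin d → ℤ)), (gr (d-2) (nn w))^2
              - ∑ w ∈ (box L : Finset (Fin d → ℤ)), (gr (d-2) (nn w))^2
            ≤ 2*(d:ℝ)*3^(d-1)*2^(d-3) * (1/((L:ℝ)+1)^(d-4)) := htail.trans h5
        _ ≤ 2*(d:ℝ)*3^(d-1)*2^(d-3) * ((2*(d:ℝ))^(d-4) / (1+R)^(d-4)) :=
              mul_le_mul_of_nonneg_left h10 hc
        _ = (2*(d:ℝ)*3^(d-1)*2^(d-3)) * (2*(d:ℝ))^(d-4) / (1+R)^(d-4) := by ring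


lemma scalar1 (q : ℕ) {σ : ℝ} (hσ : 0 ≤ σ) : gr (q+2) σ * (1+σ)^2 ≤ 8 * gr q σ := by
  rw [gr, gr, div_mul_eq_mul_div, mul_one_div, div_le_div_iff₀ (by positivity) (by positivity)]
  have e0 : σ ≤ 1 + σ^(q+2) := by
    have := pow_le_one_add_pow hσ (e := 1) (p := q+2) (by omega)
    rwa [pow_one] at this
  have e1 : σ^2 ≤ 1 + σ^(q+2) := pow_le_one_add_pow hσ (by omega)
  have e2 : σ^q ≤ 1 + σ^(q+2) := pow_le_one_add_pow hσ (by omega)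
  have e3 : σ^q * σ ≤ 1 + σ^(q+2) := by
    rw [← pow_succ]
    exact pow_le_one_add_pow hσ (by omega)
  have e4 : σ^q * σ^2 ≤ 1 + σ^(q+2) := by
    rw [← pow_add]
    exact pow_le_one_add_pow hσ (by omega)
  nlinarith [e0, e1, e2, e3, e4, pow_nonneg hσ (q+2)]

lemma scalar2 (q : ℕ) {σ : ℝ} (hσ : 0 ≤ σ) : 1/(1+σ)^q ≤ 2 * gr q σ := by
  rw [gr, mul_one_div, div_le_div_iff₀ (by positivity) (by positivity)]
  have h1 : σ^q ≤ (1+σ)^q := pow_le_pow_left₀ hσ (by linarith) q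
  have h2 : (1:ℝ) ≤ (1+σ)^q := one_le_pow₀ (by linarith)
  nlinarith

lemma tsum_translate (H : (Fin d → ℤ) → ℝ≥0∞) (x : Fin d → ℤ) :
    ∑' y, H (y - x) = ∑' w, H w := (Equiv.subRight x).tsum_eq H

/-- the constant in Claim B -/
def CB (d : ℕ) : ℝ :=
  16 * 2^(d-2) * (1 + 2*(d:ℝ)*3^(d-1)) + 4 * ((2*(d:ℝ)*3^(d-1)*2^(d-3)) * (2*(d:ℝ))^(d-4))

lemma CB_pos (hd : 5 ≤ d) : 0 < CB d := by
  have : (0:ℝ) < (d:ℝ) := by positivity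
  unfold CB
  positivity

/-- Claim B : convolution of two `(d-2)`-kernels is bounded by the `(d-4)`-kernel. -/
lemma claimB (hd : 5 ≤ d) (x z : Fin d → ℤ) :
    ∑' y : Fin d → ℤ, ENNReal.ofReal (gr (d-2) (nn (z - y)) * gr (d-2) (nn (x - y)))
      ≤ ENNReal.ofReal (CB d * gr (d-4) (nn (x - z))) := by
  have hd0 : (0:ℝ) < (d:ℝ) := by positivity
  set σ := nn (x - z) with hσdef
  have hσ : 0 ≤ σ := nn_nonneg _
  set T1 : (Fin d → ℤ) → ℝ≥0∞ :=
    fun v => if nn v ≤ σ then ENNReal.ofReal (gr (d-2) (nn v)) else 0 with hT1def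
  set T2 : (Fin d → ℤ) → ℝ≥0∞ :=
    fun v => if σ < nn v then ENNReal.ofReal ((gr (d-2) (nn v))^2) else 0 with hT2def
  set A : ℝ≥0∞ := ENNReal.ofReal (2^(d-2) * gr (d-2) σ) with hAdef
  have hApos : 0 ≤ 2^(d-2) * gr (d-2) σ := mul_nonneg (by positivity) (gr_nonneg hσ _)
  have hpoint : ∀ y, ENNReal.ofReal (gr (d-2) (nn (z - y)) * gr (d-2) (nn (x - y)))
      ≤ (A * T1 (y - x) + T2 (y - x)) + (A * T1 (y - z) + T2 (y - z)) := by
    intro y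
    have hax : nn (x - y) = nn (y - x) := nn_sub_symm x y
    have haz : nn (z - y) = nn (y - z) := nn_sub_symm z y
    rw [haz, hax]
    set a := nn (y - z) with ha
    set b := nn (y - x) with hb
    have ha0 : 0 ≤ a := nn_nonneg _
    have hb0 : 0 ≤ b := nn_nonneg _
    have htri : σ ≤ b + a := by
      calc σ = nn ((x - y) + (y - z)) := by rw [hσdef, sub_add_sub_cancel]
      _ ≤ nn (x - y) + nn (y - z) := nn_triangle _ _
      _ = b + a := by rw [hax]
    rcases le_total b a with hba | hab
    · have h2a : σ ≤ 2 * a := by linarith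
      rcases le_or_gt b σ with hbs | hsb
      · have hkey : gr (d-2) a * gr (d-2) b ≤ (2^(d-2) * gr (d-2) σ) * gr (d-2) b :=
          mul_le_mul_of_nonneg_right (gr_double hσ ha0 h2a _) (gr_nonneg hb0 _)
        have hT : T1 (y - x) = ENNReal.ofReal (gr (d-2) b) := if_pos hbs
        have hstep : ENNReal.ofReal (gr (d-2) a * gr (d-2) b) ≤ A * T1 (y - x) := by
          rw [hT, hAdef, ← ENNReal.ofReal_mul hApos]
          exact ENNReal.ofReal_le_ofReal hkey
        exact hstep.trans ((self_le_add_right _ _).trans (self_le_add_right _ _))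
      · have hkey : gr (d-2) a * gr (d-2) b ≤ (gr (d-2) b)^2 := by
          have h1 := gr_anti hb0 hba (d-2)
          nlinarith [gr_nonneg hb0 (d-2), gr_nonneg ha0 (d-2)]
        have hT : T2 (y - x) = ENNReal.ofReal ((gr (d-2) b)^2) := if_pos hsb
        have hstep : ENNReal.ofReal (gr (d-2) a * gr (d-2) b) ≤ T2 (y - x) := by
          rw [hT]
          exact ENNReal.ofReal_le_ofReal hkey
        exact hstep.trans ((self_le_add_left _ _).trans (self_le_add_right _ _))
    · have h2b : σ ≤ 2 * b := by linarith
      rcases le_or_gt a σ with has | hsa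
      · have hkey : gr (d-2) a * gr (d-2) b ≤ (2^(d-2) * gr (d-2) σ) * gr (d-2) a := by
          have h0 := mul_le_mul_of_nonneg_right (gr_double hσ hb0 h2b (d-2)) (gr_nonneg ha0 (d-2))
          nlinarith [h0]
        have hT : T1 (y - z) = ENNReal.ofReal (gr (d-2) a) := if_pos has
        have hstep : ENNReal.ofReal (gr (d-2) a * gr (d-2) b) ≤ A * T1 (y - z) := by
          rw [hT, hAdef, ← ENNReal.ofReal_mul hApos]
          exact ENNReal.ofReal_le_ofReal hkey
        exact hstep.trans ((self_le_add_right _ _).trans (self_le_add_left _ _))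
      · have hkey : gr (d-2) a * gr (d-2) b ≤ (gr (d-2) a)^2 := by
          have h1 := gr_anti ha0 hab (d-2)
          nlinarith [gr_nonneg hb0 (d-2), gr_nonneg ha0 (d-2)]
        have hT : T2 (y - z) = ENNReal.ofReal ((gr (d-2) a)^2) := if_pos hsa
        have hstep : ENNReal.ofReal (gr (d-2) a * gr (d-2) b) ≤ T2 (y - z) := by
          rw [hT]
          exact ENNReal.ofReal_le_ofReal hkey
        exact hstep.trans ((self_le_add_left _ _).trans (self_le_add_left _ _))
  have htr1 : ∑' y : Fin d → ℤ, T1 (y - x) = ∑' w, T1 w := tsum_translate T1 x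
  have htr2 : ∑' y : Fin d → ℤ, T2 (y - x) = ∑' w, T2 w := tsum_translate T2 x
  have htr3 : ∑' y : Fin d → ℤ, T1 (y - z) = ∑' w, T1 w := tsum_translate T1 z
  have htr4 : ∑' y : Fin d → ℤ, T2 (y - z) = ∑' w, T2 w := tsum_translate T2 z
  have hS1 : ∑' w, T1 w ≤ ENNReal.ofReal ((1 + 2*(d:ℝ)*3^(d-1)) * (1+σ)^2) := S1 hd hσ
  have hS2 : ∑' w, T2 w
      ≤ ENNReal.ofReal ((2*(d:ℝ)*3^(d-1)*2^(d-3)) * (2*(d:ℝ))^(d-4) / (1+σ)^(d-4)) := S2 hd hσ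
  -- scalar simplifications
  have hq2 : d - 2 = (d - 4) + 2 := by omega
  have hsc1 : (2:ℝ)^(d-2) * gr (d-2) σ * ((1 + 2*(d:ℝ)*3^(d-1)) * (1+σ)^2)
      ≤ (8 * 2^(d-2) * (1 + 2*(d:ℝ)*3^(d-1))) * gr (d-4) σ := by
    have h := scalar1 (d-4) hσ
    rw [← hq2] at h
    have hc : (0:ℝ) ≤ 2^(d-2) * (1 + 2*(d:ℝ)*3^(d-1)) := by positivity
    calc (2:ℝ)^(d-2) * gr (d-2) σ * ((1 + 2*(d:ℝ)*3^(d-1)) * (1+σ)^2)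
        = (2^(d-2) * (1 + 2*(d:ℝ)*3^(d-1))) * (gr (d-2) σ * (1+σ)^2) := by ring
    _ ≤ (2^(d-2) * (1 + 2*(d:ℝ)*3^(d-1))) * (8 * gr (d-4) σ) :=
        mul_le_mul_of_nonneg_left h hc
    _ = (8 * 2^(d-2) * (1 + 2*(d:ℝ)*3^(d-1))) * gr (d-4) σ := by ring
  have hsc2 : (2*(d:ℝ)*3^(d-1)*2^(d-3)) * (2*(d:ℝ))^(d-4) / (1+σ)^(d-4)
      ≤ (2 * ((2*(d:ℝ)*3^(d-1)*2^(d-3)) * (2*(d:ℝ))^(d-4))) * gr (d-4) σ := by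
    have h := scalar2 (d-4) hσ
    have hc : (0:ℝ) ≤ (2*(d:ℝ)*3^(d-1)*2^(d-3)) * (2*(d:ℝ))^(d-4) := by positivity
    calc (2*(d:ℝ)*3^(d-1)*2^(d-3)) * (2*(d:ℝ))^(d-4) / (1+σ)^(d-4)
        = ((2*(d:ℝ)*3^(d-1)*2^(d-3)) * (2*(d:ℝ))^(d-4)) * (1/(1+σ)^(d-4)) := by ring
    _ ≤ ((2*(d:ℝ)*3^(d-1)*2^(d-3)) * (2*(d:ℝ))^(d-4)) * (2 * gr (d-4) σ) :=
        mul_le_mul_of_nonneg_left h hc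
    _ = (2 * ((2*(d:ℝ)*3^(d-1)*2^(d-3)) * (2*(d:ℝ))^(d-4))) * gr (d-4) σ := by ring
  have hAT1 : A * ∑' w, T1 w
      ≤ ENNReal.ofReal ((8 * 2^(d-2) * (1 + 2*(d:ℝ)*3^(d-1))) * gr (d-4) σ) := by
    calc A * ∑' w, T1 w ≤ A * ENNReal.ofReal ((1 + 2*(d:ℝ)*3^(d-1)) * (1+σ)^2) :=
        mul_le_mul_right hS1 A
    _ = ENNReal.ofReal ((2:ℝ)^(d-2) * gr (d-2) σ * ((1 + 2*(d:ℝ)*3^(d-1)) * (1+σ)^2)) := by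
        rw [hAdef, ← ENNReal.ofReal_mul hApos]
    _ ≤ _ := ENNReal.ofReal_le_ofReal hsc1
  have hT2b : ∑' w, T2 w
      ≤ ENNReal.ofReal ((2 * ((2*(d:ℝ)*3^(d-1)*2^(d-3)) * (2*(d:ℝ))^(d-4))) * gr (d-4) σ) :=
    hS2.trans (ENNReal.ofReal_le_ofReal hsc2)
  have hgq : 0 ≤ gr (d-4) σ := gr_nonneg hσ _
  calc ∑' y : Fin d → ℤ, ENNReal.ofReal (gr (d-2) (nn (z - y)) * gr (d-2) (nn (x - y)))
      ≤ ∑' y : Fin d → ℤ, ((A * T1 (y - x) + T2 (y - x)) + (A * T1 (y - z) + T2 (y - z))) :=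
        ENNReal.tsum_le_tsum hpoint
  _ = (A * ∑' y : Fin d → ℤ, T1 (y - x) + ∑' y : Fin d → ℤ, T2 (y - x))
      + (A * ∑' y : Fin d → ℤ, T1 (y - z) + ∑' y : Fin d → ℤ, T2 (y - z)) := by
        rw [ENNReal.tsum_add, ENNReal.tsum_add, ENNReal.tsum_add,
          ENNReal.tsum_mul_left, ENNReal.tsum_mul_left]
  _ = (A * ∑' w, T1 w + ∑' w, T2 w) + (A * ∑' w, T1 w + ∑' w, T2 w) := by
        rw [htr1, htr2, htr3, htr4]
  _ ≤ (ENNReal.ofReal ((8 * 2^(d-2) * (1 + 2*(d:ℝ)*3^(d-1))) * gr (d-4) σ)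
        + ENNReal.ofReal ((2 * ((2*(d:ℝ)*3^(d-1)*2^(d-3)) * (2*(d:ℝ))^(d-4))) * gr (d-4) σ))
      + (ENNReal.ofReal ((8 * 2^(d-2) * (1 + 2*(d:ℝ)*3^(d-1))) * gr (d-4) σ)
        + ENNReal.ofReal ((2 * ((2*(d:ℝ)*3^(d-1)*2^(d-3)) * (2*(d:ℝ))^(d-4))) * gr (d-4) σ)) :=
        add_le_add (add_le_add hAT1 hT2b) (add_le_add hAT1 hT2b)
  _ = ENNReal.ofReal (CB d * gr (d-4) σ) := by
        have n1 : 0 ≤ (8 * 2^(d-2) * (1 + 2*(d:ℝ)*3^(d-1))) * gr (d-4) σ :=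
          mul_nonneg (by positivity) hgq
        have n2 : 0 ≤ (2 * ((2*(d:ℝ)*3^(d-1)*2^(d-3)) * (2*(d:ℝ))^(d-4))) * gr (d-4) σ :=
          mul_nonneg (by positivity) hgq
        rw [← ENNReal.ofReal_add n1 n2,
          ← ENNReal.ofReal_add (add_nonneg n1 n2) (add_nonneg n1 n2)]
        congr 1
        rw [CB]
        ring


lemma gZ_eq {k : ℕ} (hk : k ≤ d) (x y : Fin d → ℤ) :
    gZ d ((d:ℝ) - k) x y = gr (d - k) (nn (x - y)) := by
  have hcast : ((d:ℝ) - (k:ℝ)) = ((d - k : ℕ) : ℝ) := by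
    rw [Nat.cast_sub hk]
  rw [gZ, gr, hcast, Real.rpow_natCast]
  rfl

end GKB

open GKB

/-- **Lemma (Green's function computation on `ℤ^d`, `d ≥ 5`).** There is `C > 0` such
that for all `z, x₁, x₂ ∈ ℤ^d`,
`∑_y g_{d−2}(z,y) g_{d−2}(x₁,y) g_{d−4}(x₂,y)
  ≤ C g_{d−4}(x₁,x₂) (g_{d−4}(x₁,z) + g_{d−4}(x₂,z))`. -/
theorem green_kernel_convolution_bound
    (d : ℕ) (hd : 5 ≤ d) :
    ∃ C > 0, ∀ z x₁ x₂ : Fin d → ℤ,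
      ∑' y : Fin d → ℤ,
        ENNReal.ofReal (gZ d ((d : ℝ) - 2) z y * gZ d ((d : ℝ) - 2) x₁ y *
          gZ d ((d : ℝ) - 4) x₂ y) ≤
      ENNReal.ofReal (C * gZ d ((d : ℝ) - 4) x₁ x₂ *
        (gZ d ((d : ℝ) - 4) x₁ z + gZ d ((d : ℝ) - 4) x₂ z)) := by
  have h2 : 2 ≤ d := by omega
  have h4 : 4 ≤ d := by omega
  have hq2 : d - 2 = (d - 4) + 2 := by omega
  refine ⟨((2:ℝ)^(d-4) + 1) * CB d, mul_pos (by positivity) (CB_pos hd), fun z x₁ x₂ => ?_⟩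
  have hrw2 : ((2:ℝ):ℝ) = ((2:ℕ):ℝ) := by norm_num
  have hrw4 : ((4:ℝ):ℝ) = ((4:ℕ):ℝ) := by norm_num
  -- rewrite all gZ into gr form
  set r := nn (x₁ - x₂) with hrdef
  set σ₁ := nn (x₁ - z) with hσ₁def
  set σ₂ := nn (x₂ - z) with hσ₂def
  have hr0 : 0 ≤ r := nn_nonneg _
  have egZr : gZ d ((d:ℝ) - 4) x₁ x₂ = gr (d-4) r := by
    rw [show ((4:ℝ)) = ((4:ℕ):ℝ) by norm_num, gZ_eq h4, hrdef]
  have egZ1 : gZ d ((d:ℝ) - 4) x₁ z = gr (d-4) σ₁ := by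
    rw [show ((4:ℝ)) = ((4:ℕ):ℝ) by norm_num, gZ_eq h4, hσ₁def]
  have egZ2 : gZ d ((d:ℝ) - 4) x₂ z = gr (d-4) σ₂ := by
    rw [show ((4:ℝ)) = ((4:ℕ):ℝ) by norm_num, gZ_eq h4, hσ₂def]
  -- pointwise bound
  have hpoint : ∀ y : Fin d → ℤ,
      ENNReal.ofReal (gZ d ((d : ℝ) - 2) z y * gZ d ((d : ℝ) - 2) x₁ y *
          gZ d ((d : ℝ) - 4) x₂ y)
      ≤ ENNReal.ofReal (((2:ℝ)^(d-4) + 1) * gr (d-4) r) *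
          (ENNReal.ofReal (gr (d-2) (nn (z - y)) * gr (d-2) (nn (x₁ - y)))
           + ENNReal.ofReal (gr (d-2) (nn (z - y)) * gr (d-2) (nn (x₂ - y)))) := by
    intro y
    have e0 : gZ d ((d:ℝ) - 2) z y = gr (d-2) (nn (z - y)) := by
      rw [show ((2:ℝ)) = ((2:ℕ):ℝ) by norm_num, gZ_eq h2]
    have e1 : gZ d ((d:ℝ) - 2) x₁ y = gr (d-2) (nn (x₁ - y)) := by
      rw [show ((2:ℝ)) = ((2:ℕ):ℝ) by norm_num, gZ_eq h2]
    have e2 : gZ d ((d:ℝ) - 4) x₂ y = gr (d-4) (nn (x₂ - y)) := by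
      rw [show ((4:ℝ)) = ((4:ℕ):ℝ) by norm_num, gZ_eq h4]
    rw [e0, e1, e2]
    have ha0 : 0 ≤ nn (x₁ - y) := nn_nonneg _
    have hc0 : 0 ≤ nn (x₂ - y) := nn_nonneg _
    have htri : r ≤ nn (x₁ - y) + nn (x₂ - y) := by
      calc r = nn ((x₁ - y) + (y - x₂)) := by rw [hrdef, sub_add_sub_cancel]
      _ ≤ nn (x₁ - y) + nn (y - x₂) := nn_triangle _ _
      _ = nn (x₁ - y) + nn (x₂ - y) := by rw [nn_sub_symm y x₂]
    have hA := claimA (d-4) ha0 hc0 hr0 htri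
    rw [← hq2] at hA
    have hg0 : 0 ≤ gr (d-2) (nn (z - y)) := gr_nonneg (nn_nonneg _) _
    have hga : 0 ≤ gr (d-2) (nn (x₁ - y)) := gr_nonneg ha0 _
    have hgc4 : 0 ≤ gr (d-4) (nn (x₂ - y)) := gr_nonneg hc0 _
    have hKr : 0 ≤ ((2:ℝ)^(d-4) + 1) * gr (d-4) r := mul_nonneg (by positivity) (gr_nonneg hr0 _)
    have hreal : gr (d-2) (nn (z - y)) * gr (d-2) (nn (x₁ - y)) * gr (d-4) (nn (x₂ - y))
        ≤ (((2:ℝ)^(d-4) + 1) * gr (d-4) r) *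
          (gr (d-2) (nn (z - y)) * gr (d-2) (nn (x₁ - y))
            + gr (d-2) (nn (z - y)) * gr (d-2) (nn (x₂ - y))) := by
      calc gr (d-2) (nn (z - y)) * gr (d-2) (nn (x₁ - y)) * gr (d-4) (nn (x₂ - y))
          = gr (d-2) (nn (z - y)) * (gr (d-2) (nn (x₁ - y)) * gr (d-4) (nn (x₂ - y))) := by ring
      _ ≤ gr (d-2) (nn (z - y)) * ((2^(d-4) + 1) * (gr (d-4) r *
            (gr (d-2) (nn (x₁ - y)) + gr (d-2) (nn (x₂ - y))))) :=
          mul_le_mul_of_nonneg_left hA hg0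
      _ = (((2:ℝ)^(d-4) + 1) * gr (d-4) r) *
          (gr (d-2) (nn (z - y)) * gr (d-2) (nn (x₁ - y))
            + gr (d-2) (nn (z - y)) * gr (d-2) (nn (x₂ - y))) := by ring
    calc ENNReal.ofReal (gr (d-2) (nn (z - y)) * gr (d-2) (nn (x₁ - y)) * gr (d-4) (nn (x₂ - y)))
        ≤ ENNReal.ofReal ((((2:ℝ)^(d-4) + 1) * gr (d-4) r) *
          (gr (d-2) (nn (z - y)) * gr (d-2) (nn (x₁ - y))
            + gr (d-2) (nn (z - y)) * gr (d-2) (nn (x₂ - y)))) := ENNReal.ofReal_le_ofReal hreal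
    _ = ENNReal.ofReal (((2:ℝ)^(d-4) + 1) * gr (d-4) r) *
          (ENNReal.ofReal (gr (d-2) (nn (z - y)) * gr (d-2) (nn (x₁ - y)))
           + ENNReal.ofReal (gr (d-2) (nn (z - y)) * gr (d-2) (nn (x₂ - y)))) := by
        rw [ENNReal.ofReal_mul hKr, ENNReal.ofReal_add (mul_nonneg hg0 hga)
          (mul_nonneg hg0 (gr_nonneg hc0 _))]
  -- sum up
  have hB1 := claimB hd x₁ z
  have hB2 := claimB hd x₂ z
  have hgq1 : 0 ≤ gr (d-4) σ₁ := gr_nonneg (nn_nonneg _) _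
  have hgq2 : 0 ≤ gr (d-4) σ₂ := gr_nonneg (nn_nonneg _) _
  have hCB : 0 ≤ CB d := (CB_pos hd).le
  calc ∑' y : Fin d → ℤ,
        ENNReal.ofReal (gZ d ((d : ℝ) - 2) z y * gZ d ((d : ℝ) - 2) x₁ y *
          gZ d ((d : ℝ) - 4) x₂ y)
      ≤ ∑' y : Fin d → ℤ, (ENNReal.ofReal (((2:ℝ)^(d-4) + 1) * gr (d-4) r) *
          (ENNReal.ofReal (gr (d-2) (nn (z - y)) * gr (d-2) (nn (x₁ - y)))
           + ENNReal.ofReal (gr (d-2) (nn (z - y)) * gr (d-2) (nn (x₂ - y))))) :=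
        ENNReal.tsum_le_tsum hpoint
  _ = ENNReal.ofReal (((2:ℝ)^(d-4) + 1) * gr (d-4) r) *
        ((∑' y : Fin d → ℤ, ENNReal.ofReal (gr (d-2) (nn (z - y)) * gr (d-2) (nn (x₁ - y))))
         + ∑' y : Fin d → ℤ, ENNReal.ofReal (gr (d-2) (nn (z - y)) * gr (d-2) (nn (x₂ - y)))) := by
      rw [ENNReal.tsum_mul_left, ENNReal.tsum_add]
  _ ≤ ENNReal.ofReal (((2:ℝ)^(d-4) + 1) * gr (d-4) r) *
        (ENNReal.ofReal (CB d * gr (d-4) σ₁) + ENNReal.ofReal (CB d * gr (d-4) σ₂)) :=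
      mul_le_mul_right (add_le_add hB1 hB2) _
  _ = ENNReal.ofReal ((((2:ℝ)^(d-4) + 1) * CB d) * gr (d-4) r * (gr (d-4) σ₁ + gr (d-4) σ₂)) := by
      rw [← ENNReal.ofReal_add (mul_nonneg hCB hgq1) (mul_nonneg hCB hgq2),
        ← ENNReal.ofReal_mul (mul_nonneg (by positivity) (gr_nonneg hr0 _))]
      congr 1
      ring
  _ = ENNReal.ofReal (((2:ℝ)^(d-4) + 1) * CB d * gZ d ((d : ℝ) - 4) x₁ x₂ *
        (gZ d ((d : ℝ) - 4) x₁ z + gZ d ((d : ℝ) - 4) x₂ z)) := by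
      rw [egZr, egZ1, egZ2]
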